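/- For every ordered partition π = (B_1,…,B_k) ∈ OP(n,k), one has Σ_{i=1}^{k} (n − max B_i) + rsb(π) = lcs(π) + ros(π); in other words, the statistic mak(π) = Σ_{i=1}^{k} (n − clos_i) + rsb(π), where clos_i is the closer of the i-th block, equals lcs(π) + ros(π). -/

import Mathlib

/-!
Fix a letter `x` in block `a`. Among the blocks to the right of `a`, those whose opener precedes
`x` either close before `x` or straddle `x`, so `ros_x = rcs_x + rsb_x`; and every block closing
before `x` lies to the left of `a` or to its right, so `#{b | clos_b < x} = lcs_x + rcs_x`.
Summing over `x` and double counting `∑_b (n - clos_b) = ∑_x #{b | clos_b < x}` gives the identity.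
-/

/-- Ordered partitions of `{1,…,n}` into `k` blocks. -/
def OP (n k : ℕ) : Finset (Fin k → Finset (Fin n)) :=
  Finset.univ.filter fun B =>
    (∀ j, (B j).Nonempty) ∧ ∀ x : Fin n, ∃ j, x ∈ B j ∧ ∀ j', x ∈ B j' → j' = j

/-- `ros_i(π)`: the number of letters `j < i` that are the opener (least element) of
their block, with the block of `j` strictly to the right of the block of `i`. -/
def rosAt {n k : ℕ} (B : Fin k → Finset (Fin n)) (x : Fin n) : ℕ :=
  ((Finset.univ : Finset (Fin n)).filter fun j =>
    j < x ∧ ∃ a b : Fin k, x ∈ B a ∧ j ∈ B b ∧ (B b).min = ↑j ∧ a < b).card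

/-- `rob_i(π)`: letters `j > i` that are the opener of their block, lying in a block
strictly to the right of the block of `i`. -/
def robAt {n k : ℕ} (B : Fin k → Finset (Fin n)) (x : Fin n) : ℕ :=
  ((Finset.univ : Finset (Fin n)).filter fun j =>
    x < j ∧ ∃ a b : Fin k, x ∈ B a ∧ j ∈ B b ∧ (B b).min = ↑j ∧ a < b).card

/-- `rcs_i(π)`: letters `j < i` that are the closer (greatest element) of their block,
lying in a block strictly to the right of the block of `i`. -/
def rcsAt {n k : ℕ} (B : Fin k → Finset (Fin n)) (x : Fin n) : ℕ :=
  ((Finset.univ : Finset (Fin n)).filter fun j =>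
    j < x ∧ ∃ a b : Fin k, x ∈ B a ∧ j ∈ B b ∧ (B b).max = ↑j ∧ a < b).card

/-- `rcb_i(π)`: letters `j > i` that are the closer of their block, lying in a block
strictly to the right of the block of `i`. -/
def rcbAt {n k : ℕ} (B : Fin k → Finset (Fin n)) (x : Fin n) : ℕ :=
  ((Finset.univ : Finset (Fin n)).filter fun j =>
    x < j ∧ ∃ a b : Fin k, x ∈ B a ∧ j ∈ B b ∧ (B b).max = ↑j ∧ a < b).card

/-- Port helper: decidability of `(B b).min < (↑x : WithBot (Fin n))` (a `WithTop` comparison). -/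
instance rsbAtMinLTDecidable {n : ℕ} (a : WithTop (Fin n)) (x : Fin n) :
    Decidable (a < (↑x : WithBot (Fin n))) :=
  WithTop.decidableLT _ _

/-- `rsb_i(π)`: the number of blocks strictly to the right of the block of `i` whose
opener is smaller than `i` and whose closer is greater than `i`. -/
def rsbAt {n k : ℕ} (B : Fin k → Finset (Fin n)) (x : Fin n) : ℕ :=
  ((Finset.univ : Finset (Fin k)).filter fun b =>
    (∃ a : Fin k, x ∈ B a ∧ a < b) ∧
      (B b).min < (↑x : WithBot (Fin n)) ∧ (↑x : WithBot (Fin n)) < (B b).max).card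

/-- `ros(π)`: the sum of `ros_i(π)` over all letters `i`. -/
def ros {n k : ℕ} (B : Fin k → Finset (Fin n)) : ℕ := ∑ x : Fin n, rosAt B x

/-- `rob(π)`: the sum of `rob_i(π)` over all letters `i`. -/
def rob {n k : ℕ} (B : Fin k → Finset (Fin n)) : ℕ := ∑ x : Fin n, robAt B x

/-- `rcs(π)`: the sum of `rcs_i(π)` over all letters `i`. -/
def rcs {n k : ℕ} (B : Fin k → Finset (Fin n)) : ℕ := ∑ x : Fin n, rcsAt B x

/-- `rcb(π)`: the sum of `rcb_i(π)` over all letters `i`. -/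
def rcb {n k : ℕ} (B : Fin k → Finset (Fin n)) : ℕ := ∑ x : Fin n, rcbAt B x

/-- `rsb(π)`: the sum of `rsb_i(π)` over all letters `i`. -/
def rsb {n k : ℕ} (B : Fin k → Finset (Fin n)) : ℕ := ∑ x : Fin n, rsbAt B x

/-- `lcs_i(π)`: letters `j < i` that are the closer of their block, lying in a block
strictly to the left of the block of `i`. -/
def lcsAt {n k : ℕ} (B : Fin k → Finset (Fin n)) (x : Fin n) : ℕ :=
  ((Finset.univ : Finset (Fin n)).filter fun j =>
    j < x ∧ ∃ a b : Fin k, x ∈ B a ∧ j ∈ B b ∧ (B b).max = ↑j ∧ b < a).card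

/-- `lcs(π)`: the sum of `lcs_i(π)` over all letters `i`. -/
def lcs {n k : ℕ} (B : Fin k → Finset (Fin n)) : ℕ := ∑ x : Fin n, lcsAt B x

/-- The closer of the `j`-th block, as a (1-based) element of `{1,…,n}`:
the greatest element of `B j` (here letters in `Fin n` are 0-based, so the letter
`x` has 1-based value `x + 1`). -/
def closVal {n k : ℕ} (B : Fin k → Finset (Fin n)) (j : Fin k) : ℕ :=
  (B j).sup fun x => (x : ℕ) + 1

/-- `mak(π) = ∑_{i=1}^{k} (n - clos_i) + rsb(π)`, where `clos_i` is the closer of the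
`i`-th block. -/
def mak {n k : ℕ} (B : Fin k → Finset (Fin n)) : ℕ :=
  (∑ j : Fin k, (n - closVal B j)) + rsb B

open Finset

section OrderedPartition

variable {n k : ℕ} {B : Fin k → Finset (Fin n)}

lemma injective_min'_of_disjoint (hne : ∀ b, (B b).Nonempty)
    (hdisj : ∀ ⦃x a b⦄, x ∈ B a → x ∈ B b → a = b) :
    Function.Injective fun b => (B b).min' (hne b) :=
  fun b c (h : (B b).min' (hne b) = (B c).min' (hne c)) =>
    hdisj (min'_mem _ _) (h ▸ min'_mem _ (hne c))

lemma injective_max'_of_disjoint (hne : ∀ b, (B b).Nonempty)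
    (hdisj : ∀ ⦃x a b⦄, x ∈ B a → x ∈ B b → a = b) :
    Function.Injective fun b => (B b).max' (hne b) :=
  fun b c (h : (B b).max' (hne b) = (B c).max' (hne c)) =>
    hdisj (max'_mem _ _) (h ▸ max'_mem _ (hne c))

lemma card_openers_lt_eq (hne : ∀ b, (B b).Nonempty)
    (hdisj : ∀ ⦃x a b⦄, x ∈ B a → x ∈ B b → a = b) {x : Fin n} {a : Fin k} (hx : x ∈ B a)
    (r : Fin k → Fin k → Prop) [DecidableRel r] :
    #{j | j < x ∧ ∃ a b : Fin k, x ∈ B a ∧ j ∈ B b ∧ (B b).min = ↑j ∧ r a b} =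
      #{b | r a b ∧ (B b).min' (hne b) < x} := by
  rw [← card_image_of_injective _ (injective_min'_of_disjoint hne hdisj)]
  congr 1
  ext j
  simp only [mem_filter, mem_univ, true_and, mem_image]
  constructor
  · rintro ⟨hjx, a', b, hxa', hjb, hmin, hr⟩
    obtain rfl := hdisj hx hxa'
    have hj : (B b).min' (hne b) = j := by simpa [← coe_min' (hne b)] using hmin
    exact ⟨b, ⟨hr, hj ▸ hjx⟩, hj⟩
  · rintro ⟨b, ⟨hr, hbx⟩, rfl⟩
    exact ⟨hbx, a, b, hx, min'_mem _ _, (coe_min' _).symm, hr⟩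

lemma card_closers_lt_eq (hne : ∀ b, (B b).Nonempty)
    (hdisj : ∀ ⦃x a b⦄, x ∈ B a → x ∈ B b → a = b) {x : Fin n} {a : Fin k} (hx : x ∈ B a)
    (r : Fin k → Fin k → Prop) [DecidableRel r] :
    #{j | j < x ∧ ∃ a b : Fin k, x ∈ B a ∧ j ∈ B b ∧ (B b).max = ↑j ∧ r a b} =
      #{b | r a b ∧ (B b).max' (hne b) < x} := by
  rw [← card_image_of_injective _ (injective_max'_of_disjoint hne hdisj)]
  congr 1
  ext j
  simp only [mem_filter, mem_univ, true_and, mem_image]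
  constructor
  · rintro ⟨hjx, a', b, hxa', hjb, hmax, hr⟩
    obtain rfl := hdisj hx hxa'
    have hj : (B b).max' (hne b) = j := by simpa [← coe_max' (hne b)] using hmax
    exact ⟨b, ⟨hr, hj ▸ hjx⟩, hj⟩
  · rintro ⟨b, ⟨hr, hbx⟩, rfl⟩
    exact ⟨hbx, a, b, hx, max'_mem _ _, (coe_max' _).symm, hr⟩

lemma rsbAt_eq_card (hne : ∀ b, (B b).Nonempty)
    (hdisj : ∀ ⦃x a b⦄, x ∈ B a → x ∈ B b → a = b) {x : Fin n} {a : Fin k} (hx : x ∈ B a) :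
    rsbAt B x = #{b | a < b ∧ (B b).min' (hne b) < x ∧ x < (B b).max' (hne b)} := by
  unfold rsbAt
  congr 1
  refine filter_congr fun b _ => ?_
  have hmin : (B b).min < (↑x : WithBot (Fin n)) ↔ (B b).min' (hne b) < x := by
    rw [← coe_min' (hne b)]; exact WithTop.coe_lt_coe
  rw [hmin, ← coe_max' (hne b), WithBot.coe_lt_coe]
  exact and_congr_left' ⟨fun ⟨a', hxa', hab⟩ => hdisj hx hxa' ▸ hab, fun hab => ⟨a, hx, hab⟩⟩

lemma rosAt_eq_rcsAt_add_rsbAt (hne : ∀ b, (B b).Nonempty)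
    (hdisj : ∀ ⦃x a b⦄, x ∈ B a → x ∈ B b → a = b) {x : Fin n} {a : Fin k} (hx : x ∈ B a) :
    rosAt B x = rcsAt B x + rsbAt B x := by
  rw [rosAt, card_openers_lt_eq hne hdisj hx, rcsAt, card_closers_lt_eq hne hdisj hx,
    rsbAt_eq_card hne hdisj hx,
    ← card_filter_add_card_filter_not (p := fun b => (B b).max' (hne b) < x), filter_filter,
    filter_filter]
  congr 2
  · ext b
    simp only [mem_filter, mem_univ, true_and]
    exact ⟨fun h => ⟨h.1.1, h.2⟩,
      fun h => ⟨⟨h.1, (min'_le_max' _ (hne b)).trans_lt h.2⟩, h.2⟩⟩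
  · ext b
    simp only [mem_filter, mem_univ, true_and, not_lt]
    refine ⟨fun h => ⟨h.1.1, h.1.2, h.2.lt_of_ne fun hbx => ?_⟩,
      fun h => ⟨⟨h.1, h.2.1⟩, h.2.2.le⟩⟩
    exact h.1.1.ne (hdisj hx (hbx ▸ max'_mem _ _))

lemma card_closers_lt_eq_lcsAt_add_rcsAt (hne : ∀ b, (B b).Nonempty)
    (hdisj : ∀ ⦃x a b⦄, x ∈ B a → x ∈ B b → a = b) {x : Fin n} {a : Fin k} (hx : x ∈ B a) :
    #{b | (B b).max' (hne b) < x} = lcsAt B x + rcsAt B x := by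
  rw [lcsAt, card_closers_lt_eq hne hdisj hx, rcsAt, card_closers_lt_eq hne hdisj hx,
    ← card_filter_add_card_filter_not (p := fun b => b < a), filter_filter, filter_filter]
  congr 2
  · ext b
    simp only [mem_filter, mem_univ, true_and]
    exact and_comm
  · ext b
    simp only [mem_filter, mem_univ, true_and, not_lt]
    refine ⟨fun h => ⟨h.2.lt_of_ne ?_, h.1⟩, fun h => ⟨h.2, h.1.le⟩⟩
    rintro rfl
    exact (le_max' _ _ hx).not_gt h.1

lemma closVal_eq_max'_add_one {j : Fin k} (hj : (B j).Nonempty) :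
    closVal B j = ((B j).max' hj : ℕ) + 1 :=
  le_antisymm (Finset.sup_le fun _ hx => Nat.add_le_add_right (le_max' _ _ hx) 1)
    (le_sup (f := fun x : Fin n => (x : ℕ) + 1) (max'_mem _ hj))

lemma sub_closVal_eq_card_gt {j : Fin k} (hj : (B j).Nonempty) :
    n - closVal B j = #{x | (B j).max' hj < x} := by
  rw [closVal_eq_max'_add_one hj, filter_lt_eq_Ioi, Fin.card_Ioi, Nat.sub_sub, add_comm 1]

lemma sum_sub_closVal_eq_sum_card_closers_lt (hne : ∀ b, (B b).Nonempty) :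
    ∑ j, (n - closVal B j) = ∑ x, #{b | (B b).max' (hne b) < x} := by
  simp only [sub_closVal_eq_card_gt (hne _), card_filter]
  exact sum_comm

end OrderedPartition

/-- For every ordered partition `π ∈ OP(n,k)`:
`∑_{i=1}^{k} (n - clos_i) + rsb(π) = lcs(π) + ros(π)`, i.e. `mak(π) = lcs(π) + ros(π)`. -/
theorem mak_eq_lcs_add_ros (n k : ℕ) (B : Fin k → Finset (Fin n)) (hB : B ∈ OP n k) :
    mak B = lcs B + ros B := by
  simp only [OP, mem_filter, mem_univ, true_and] at hB
  obtain ⟨hne, hpart⟩ := hB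
  choose blk hblk hblk_unique using hpart
  have hdisj : ∀ ⦃x a b⦄, x ∈ B a → x ∈ B b → a = b := fun _ a b ha hb =>
    (hblk_unique _ a ha).trans (hblk_unique _ b hb).symm
  calc mak B = ∑ x, (lcsAt B x + rcsAt B x) + ∑ x, rsbAt B x := by
        rw [mak, sum_sub_closVal_eq_sum_card_closers_lt hne, rsb]
        simp only [card_closers_lt_eq_lcsAt_add_rcsAt hne hdisj (hblk _)]
    _ = ∑ x, lcsAt B x + ∑ x, (rcsAt B x + rsbAt B x) := by
        simp only [sum_add_distrib, add_assoc]
    _ = lcs B + ros B := by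
        simp only [lcs, ros, rosAt_eq_rcsAt_add_rsbAt hne hdisj (hblk _)]
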